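/- Let a ∈ ℝ and b = (b_1,…,b_n), c = (c_1,…,c_n) ∈ ℝ^n with 0 < b_i < c_i for all i, and let x = (x_1,…,x_n) ∈ ℝ^n with |x_1| + … + |x_n| < 1. Then the Lauricella series F_A^{(n)}(a,b;c;x) = Σ_{k∈ℕ^n} (a)_{k_1+…+k_n} ∏_{i=1}^n [(b_i)_{k_i}/((c_i)_{k_i} k_i!)] x_i^{k_i} equals the Euler-type integral ∏_{i=1}^n [Γ(c_i)/(Γ(b_i)Γ(c_i−b_i))] · ∫_{[0,1]^n} ∏_{i=1}^n u_i^{b_i−1}(1−u_i)^{c_i−b_i−1} · (1 − Σ_{i=1}^n x_i u_i)^{−a} du_1…du_n. -/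

import Mathlib

open MeasureTheory Real

/-- The Pochhammer symbol `(q)_m = q (q+1) ⋯ (q+m-1)` for a real `q`. -/
noncomputable def pochhammerR (q : ℝ) (m : ℕ) : ℝ := (ascPochhammer ℝ m).eval q

/-- The Lauricella hypergeometric series `F_A^{(n)}(a, b; c; x)`. -/
noncomputable def lauricellaSeries (n : ℕ) (a : ℝ) (b c x : Fin n → ℝ) : ℝ :=
  ∑' k : Fin n → ℕ,
    pochhammerR a (∑ i, k i) *
      ∏ i, pochhammerR (b i) (k i) / (pochhammerR (c i) (k i) * (Nat.factorial (k i) : ℝ)) *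
        x i ^ (k i)


lemma pochhammerR_zero (q : ℝ) : pochhammerR q 0 = 1 := by
  simp [pochhammerR]

lemma pochhammerR_succ (q : ℝ) (m : ℕ) :
    pochhammerR q (m + 1) = pochhammerR q m * (q + m) := by
  simp [pochhammerR, ascPochhammer_succ_right]

lemma pochhammerR_pos {q : ℝ} (hq : 0 < q) (m : ℕ) : 0 < pochhammerR q m := by
  induction m with
  | zero => simp [pochhammerR_zero]
  | succ m ih =>
    rw [pochhammerR_succ]
    exact mul_pos ih (by positivity)

lemma abs_pochhammerR_le (a : ℝ) (m : ℕ) : |pochhammerR a m| ≤ pochhammerR (|a| + 1) m := by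
  induction m with
  | zero => simp [pochhammerR_zero]
  | succ m ih =>
    rw [pochhammerR_succ, pochhammerR_succ, abs_mul]
    have h1 : |a + (m : ℝ)| ≤ |a| + 1 + m := by
      calc |a + (m : ℝ)| ≤ |a| + m := by
            exact (abs_add_le _ _).trans (by simp)
        _ ≤ |a| + 1 + m := by linarith
    exact mul_le_mul ih h1 (abs_nonneg _) (pochhammerR_pos (by positivity) m).le

/-- Ratio-test summability for shifted Pochhammer series. -/
lemma summable_pochhammerR_shift {q r : ℝ} (hq : 0 < q) (hr : |r| < 1) (j : ℕ) :
    Summable (fun m : ℕ => pochhammerR q (m + j) * r ^ m / (m.factorial : ℝ)) := by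
  rcases eq_or_ne r 0 with h0 | h0
  · apply summable_of_ne_finset_zero (s := {0})
    intro m hm
    simp only [Finset.mem_singleton] at hm
    simp [h0, zero_pow hm]
  · apply summable_of_ratio_test_tendsto_lt_one hr
    · filter_upwards with m
      have h1 := pochhammerR_pos hq (m + j)
      positivity
    · have key : ∀ m : ℕ, ‖pochhammerR q (m + 1 + j) * r ^ (m + 1) / ((m + 1).factorial : ℝ)‖ /
          ‖pochhammerR q (m + j) * r ^ m / (m.factorial : ℝ)‖ =
          |r| * ((q + ((m : ℝ) + j)) / (m + 1)) := by
        intro m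
        have h1 := pochhammerR_pos hq (m + j)
        have hne : pochhammerR q (m + j) * r ^ m / (m.factorial : ℝ) ≠ 0 := by
          have : r ^ m ≠ 0 := pow_ne_zero _ h0
          positivity
        have hstep : pochhammerR q (m + 1 + j) * r ^ (m + 1) / ((m + 1).factorial : ℝ) =
            (pochhammerR q (m + j) * r ^ m / (m.factorial : ℝ)) *
              ((q + ((m : ℝ) + j)) * r / ((m : ℝ) + 1)) := by
          have h2 : m + 1 + j = (m + j) + 1 := by ring
          rw [h2, pochhammerR_succ, pow_succ, Nat.factorial_succ]
          have hfm : (m.factorial : ℝ) ≠ 0 := by positivity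
          push_cast
          field_simp
        rw [hstep, norm_mul, mul_comm ‖pochhammerR q (m + j) * r ^ m / (m.factorial : ℝ)‖,
          mul_div_assoc, div_self (norm_ne_zero_iff.mpr hne), mul_one]
        rw [Real.norm_eq_abs, abs_div, abs_mul]
        rw [abs_of_pos (show (0:ℝ) < q + ((m : ℝ) + j) by positivity),
          abs_of_pos (show (0:ℝ) < (m : ℝ) + 1 by positivity)]
        ring
      simp only [key]
      have h2 : Filter.Tendsto (fun m : ℕ => (q + ((m : ℝ) + j)) / (m + 1)) Filter.atTop
          (nhds 1) := by
        have : ∀ m : ℕ, (q + ((m : ℝ) + j)) / (m + 1) = (q + j - 1) / ((m : ℝ) + 1) + 1 := by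
          intro m
          have : (m : ℝ) + 1 ≠ 0 := by positivity
          field_simp
          ring
        simp only [this]
        have h3 : Filter.Tendsto (fun m : ℕ => (q + j - 1) / ((m : ℝ) + 1)) Filter.atTop
            (nhds 0) := by
          apply Filter.Tendsto.div_atTop tendsto_const_nhds
          exact Filter.tendsto_atTop_add_const_right _ 1 tendsto_natCast_atTop_atTop
        simpa using h3.add tendsto_const_nhds
      have := (tendsto_const_nhds (x := |r|) (f := Filter.atTop (α := ℕ))).mul h2
      simpa using this

lemma summable_pochhammerR_abs (a : ℝ) {s r : ℝ} (hs : |s| ≤ r) (hr : r < 1) :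
    Summable (fun m : ℕ => pochhammerR a m * s ^ m / (m.factorial : ℝ)) := by
  apply Summable.of_norm_bounded
    (g := fun m => pochhammerR (|a| + 1) m * r ^ m / (m.factorial : ℝ))
  · simpa using summable_pochhammerR_shift (q := |a| + 1) (by positivity)
      (by rw [abs_of_nonneg ((abs_nonneg s).trans hs)]; exact hr) 0
  · intro m
    rw [Real.norm_eq_abs, abs_div, abs_mul, abs_pow,
      abs_of_pos (show (0:ℝ) < (m.factorial : ℝ) by positivity)]
    apply div_le_div_of_nonneg_right ?_ (by positivity)
    exact mul_le_mul (abs_pochhammerR_le a m)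
      (pow_le_pow_left₀ (abs_nonneg s) hs m) (by positivity)
      (pochhammerR_pos (by positivity) m).le

/-- Binomial series: `(1 - t) ^ (-a) = ∑ (a)_m t^m / m!` for `|t| < 1`. -/
lemma hasSum_binomialR (a : ℝ) {t : ℝ} (ht : |t| < 1) :
    HasSum (fun m : ℕ => pochhammerR a m * t ^ m / (m.factorial : ℝ)) ((1 - t) ^ (-a)) := by
  classical
  set r : ℝ := (|t| + 1) / 2 with hr_def
  have htr : |t| < r := by rw [hr_def]; linarith
  have hr1 : r < 1 := by rw [hr_def]; linarith
  have hr0 : 0 < r := by rw [hr_def]; positivity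
  set q : ℝ := |a| + 1 with hq_def
  have hq0 : (0:ℝ) < q := by rw [hq_def]; positivity
  set e : ℕ → ℝ := fun m => pochhammerR a m / (m.factorial : ℝ) with he_def
  set g : ℕ → ℝ → ℝ := fun m s => e m * s ^ m with hg_def
  set g' : ℕ → ℝ → ℝ := fun m s => e m * (m * s ^ (m - 1)) with hg'_def
  set u : ℕ → ℝ := fun m => (1 / r) * (pochhammerR q (m + 1) * r ^ m / (m.factorial : ℝ))
    with hu_def
  have hu : Summable u := (summable_pochhammerR_shift hq0 (by rwa [abs_of_pos hr0]) 1).mul_left _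
  have hbound : ∀ (m : ℕ) (y : ℝ), y ∈ Set.Ioo (-r) r → ‖g' m y‖ ≤ u m := by
    intro m y hy
    have hyr : |y| ≤ r := by
      rw [abs_le]; exact ⟨hy.1.le, hy.2.le⟩
    rcases Nat.eq_zero_or_pos m with rfl | hm
    · have hz : g' 0 y = 0 := by simp [hg'_def]
      rw [hz, norm_zero, hu_def]
      refine mul_nonneg (by positivity) (div_nonneg (mul_nonneg
        (pochhammerR_pos hq0 _).le (by positivity)) (by positivity))
    · have h1 : ‖g' m y‖ = |pochhammerR a m| * (m * |y| ^ (m - 1)) / (m.factorial : ℝ) := by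
        rw [hg'_def, he_def]
        simp only [Real.norm_eq_abs, abs_mul, abs_div, abs_pow]
        rw [abs_of_nonneg (show (0:ℝ) ≤ (m:ℝ) by positivity),
          abs_of_pos (show (0:ℝ) < (m.factorial : ℝ) by positivity)]
        ring
      rw [h1, hu_def]
      have h2 : |pochhammerR a m| * ((m:ℝ) * |y| ^ (m - 1)) ≤
          pochhammerR q (m + 1) * r ^ (m-1) := by
        have hm' : (m : ℝ) ≤ q + m := by linarith
        calc |pochhammerR a m| * ((m:ℝ) * |y| ^ (m - 1))
            ≤ pochhammerR q m * ((q + m) * r ^ (m - 1)) := by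
              apply mul_le_mul (abs_pochhammerR_le a m) ?_ (by positivity)
                (pochhammerR_pos hq0 m).le
              exact mul_le_mul hm' (pow_le_pow_left₀ (abs_nonneg y) hyr _) (by positivity)
                (by positivity)
          _ = pochhammerR q (m + 1) * r ^ (m-1) := by rw [pochhammerR_succ]; ring
      have h3 : r ^ (m - 1) = r ^ m / r := by
        have hm2 : r ^ m = r ^ (m - 1) * r := by
          conv_lhs => rw [← Nat.succ_pred_eq_of_pos hm]
          rw [pow_succ, Nat.pred_eq_sub_one]
        rw [hm2]
        field_simp
      calc |pochhammerR a m| * ((m:ℝ) * |y| ^ (m - 1)) / (m.factorial : ℝ)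
          ≤ pochhammerR q (m + 1) * r ^ (m - 1) / (m.factorial : ℝ) :=
            div_le_div_of_nonneg_right h2 (by positivity)
        _ = 1 / r * (pochhammerR q (m + 1) * r ^ m / (m.factorial : ℝ)) := by
            rw [h3]; field_simp; try ring
  have hderiv : ∀ (m : ℕ) (y : ℝ), y ∈ Set.Ioo (-r) r → HasDerivAt (g m) (g' m y) y := by
    intro m y _
    exact (hasDerivAt_pow m y).const_mul (e m)
  have hopen : IsOpen (Set.Ioo (-r) r) := isOpen_Ioo
  have hconn : IsPreconnected (Set.Ioo (-r) r) := (convex_Ioo (-r) r).isPreconnected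
  have h0mem : (0:ℝ) ∈ Set.Ioo (-r) r := by constructor <;> [linarith; linarith]
  have htmem : t ∈ Set.Ioo (-r) r := by
    rcases abs_lt.mp htr with ⟨h1, h2⟩; exact ⟨h1, h2⟩
  have hg0 : Summable (fun m => g m 0) := by
    apply summable_of_ne_finset_zero (s := {0})
    intro m hm
    simp only [Finset.mem_singleton] at hm
    simp [hg_def, zero_pow hm]
  have hf : ∀ s ∈ Set.Ioo (-r) r,
      HasDerivAt (fun z => ∑' m, g m z) (∑' m, g' m s) s := fun s hs =>
    hasDerivAt_tsum_of_isPreconnected hu hopen hconn hderiv hbound h0mem hg0 hs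
  set f : ℝ → ℝ := fun z => ∑' m, g m z with hf_def
  set D : ℝ → ℝ := fun s => ∑' m, g' m s with hD_def
  have hSg : ∀ s ∈ Set.Ioo (-r) r, Summable (fun m => g m s) := by
    intro s hs
    have habs : |s| ≤ r := by rw [abs_le]; exact ⟨hs.1.le, hs.2.le⟩
    exact (summable_pochhammerR_abs a habs hr1).congr (fun m => by
      rw [hg_def, he_def]; ring)
  have hSg' : ∀ s ∈ Set.Ioo (-r) r, Summable (fun m => g' m s) := fun s hs =>
    Summable.of_norm_bounded (g := u) hu (fun m => hbound m s hs)
  have coeff_id : ∀ m : ℕ, e (m + 1) * (m + 1) - e m * m = a * e m := by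
    intro m
    rw [he_def]
    simp only
    rw [pochhammerR_succ, Nat.factorial_succ]
    have hfm : (m.factorial : ℝ) ≠ 0 := by positivity
    push_cast
    field_simp
    ring
  have gs_id : ∀ (m : ℕ) (s : ℝ), g' m s * s = e m * m * s ^ m := by
    intro m s
    rcases Nat.eq_zero_or_pos m with rfl | hm
    · simp [hg'_def]
    · have : s ^ (m - 1) * s = s ^ m := by
        conv_rhs => rw [← Nat.succ_pred_eq_of_pos hm]
        rw [pow_succ, Nat.pred_eq_sub_one]
      rw [hg'_def]
      simp only
      rw [mul_assoc, mul_assoc, this]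
      ring
  have hkey : ∀ s ∈ Set.Ioo (-r) r, D s * (1 - s) = a * f s := by
    intro s hs
    have hS1 : Summable (fun m => g' (m + 1) s) :=
      (summable_nat_add_iff 1).mpr (hSg' s hs)
    have hS2 : Summable (fun m => e m * m * s ^ m) :=
      ((hSg' s hs).mul_right s).congr (fun m => gs_id m s)
    have h1 : D s = ∑' m, g' (m + 1) s := by
      rw [hD_def]
      simp only
      rw [Summable.tsum_eq_zero_add (hSg' s hs)]
      have : g' 0 s = 0 := by simp [hg'_def]
      rw [this, zero_add]
    have h2 : D s * s = ∑' m, e m * m * s ^ m := by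
      rw [hD_def]
      simp only
      rw [← tsum_mul_right]
      exact tsum_congr (fun m => gs_id m s)
    have h3 : ∀ m : ℕ, g' (m + 1) s = e (m + 1) * (m + 1) * s ^ m := by
      intro m
      rw [hg'_def]
      simp only [Nat.add_sub_cancel]
      push_cast
      ring
    have h4 : D s * (1 - s) = (∑' m, g' (m + 1) s) - ∑' m, e m * m * s ^ m := by
      rw [← h1, ← h2]; ring
    rw [h4, ← Summable.tsum_sub hS1 hS2]
    have h5 : ∀ m : ℕ, g' (m + 1) s - e m * m * s ^ m = a * g m s := by
      intro m
      rw [h3 m, hg_def]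
      simp only
      linear_combination (s ^ m) * coeff_id m
    rw [tsum_congr h5, hf_def]
    simp only
    rw [tsum_mul_left]
  set F : ℝ → ℝ := fun s => f s * (1 - s) ^ a with hF_def
  have hFderiv : ∀ s ∈ Set.Ioo (-r) r, HasDerivAt F 0 s := by
    intro s hs
    have h1s : (0:ℝ) < 1 - s := by
      have := hs.2; linarith
    have hinner : HasDerivAt (fun z : ℝ => 1 - z) (-1) s := by
      simpa using (hasDerivAt_id s).const_sub 1
    have houter : HasDerivAt (fun x : ℝ => x ^ a) (a * (1 - s) ^ (a - 1)) (1 - s) :=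
      Real.hasDerivAt_rpow_const (Or.inl h1s.ne')
    have hrp : HasDerivAt (fun z : ℝ => (1 - z) ^ a) (a * (1 - s) ^ (a - 1) * (-1)) s :=
      houter.comp s hinner
    have hmul := (hf s hs).mul hrp
    have hzero : D s * (1 - s) ^ a + f s * (a * (1 - s) ^ (a - 1) * (-1)) = 0 := by
      have hkey' := hkey s hs
      have key : (1 - s) ^ a = (1 - s) ^ (a - 1) * (1 - s) := by
        rw [← Real.rpow_add_one h1s.ne' (a - 1), sub_add_cancel]
      rw [key]
      linear_combination ((1 - s) ^ (a - 1)) * hkey'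
    rw [hzero] at hmul
    exact hmul
  have hconst : F t = F 0 := by
    apply (convex_Ioo (-r) r).is_const_of_fderivWithin_eq_zero
      (fun s hs => ((hFderiv s hs).differentiableAt).differentiableWithinAt) ?_ htmem h0mem
    intro z hz
    have hfd : HasFDerivAt F (ContinuousLinearMap.smulRight (1 : ℝ →L[ℝ] ℝ) 0) z :=
      hasDerivAt_iff_hasFDerivAt.mp (hFderiv z hz)
    rw [fderivWithin_of_isOpen hopen hz, hfd.fderiv]
    ext y
    simp
  have hF0 : F 0 = 1 := by
    rw [hF_def]
    simp only
    have hf0 : f 0 = 1 := by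
      rw [hf_def]
      simp only
      rw [tsum_eq_single 0 (fun m hm => by simp [hg_def, zero_pow hm])]
      simp [hg_def, he_def, pochhammerR_zero]
    rw [hf0, sub_zero, Real.one_rpow, one_mul]
  have h1t : (0:ℝ) < 1 - t := by
    have := (abs_lt.mp ht).1
    have := (abs_lt.mp ht).2
    linarith
  have hft : f t = (1 - t) ^ (-a) := by
    have hne : (1 - t) ^ a ≠ 0 := (Real.rpow_pos_of_pos h1t a).ne'
    have hthis : f t * (1 - t) ^ a = 1 := by
      have hFt : F t = 1 := by rw [hconst, hF0]
      simpa [hF_def] using hFt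
    rw [Real.rpow_neg h1t.le]
    field_simp
    linarith [hthis]
  have hfun : (fun m : ℕ => pochhammerR a m * t ^ m / (m.factorial : ℝ)) =
      fun m : ℕ => g m t := by
    funext m
    rw [hg_def, he_def]
    ring
  rw [hfun]
  have := (hSg t htmem).hasSum
  rwa [show ∑' m, g m t = (1 - t) ^ (-a) from hft] at this

variable {n : ℕ}

lemma piAntidiag_prod_sum (t : Fin n → ℝ) (m : ℕ) :
    ∑ k ∈ Finset.piAntidiag Finset.univ m, ∏ i, t i ^ k i / ((k i).factorial : ℝ)
      = (∑ i, t i) ^ m / (m.factorial : ℝ) := by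
  rw [Finset.sum_pow_eq_sum_piAntidiag, Finset.sum_div]
  apply Finset.sum_congr rfl
  intro k hk
  have hsum : ∑ i, k i = m := (Finset.mem_piAntidiag.mp hk).1
  have hspec := Nat.multinomial_spec Finset.univ k
  rw [hsum] at hspec
  have hcast : ((∏ i, (k i).factorial : ℕ) : ℝ) * (Nat.multinomial Finset.univ k : ℝ)
      = (m.factorial : ℝ) := by
    rw [← Nat.cast_mul, hspec]
  rw [Finset.prod_div_distrib]
  have hprodfac : (∏ i, ((k i).factorial : ℝ)) = ((∏ i, (k i).factorial : ℕ) : ℝ) := by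
    rw [Nat.cast_prod]
  rw [hprodfac]
  have h1 : ((∏ i, (k i).factorial : ℕ) : ℝ) ≠ 0 := by positivity
  have h3 : (Nat.multinomial Finset.univ k : ℝ) ≠ 0 := by
    have := Nat.multinomial_pos Finset.univ k
    positivity
  rw [← hcast]
  field_simp

lemma summable_lauricella_nonneg {q : ℝ} (hq : 0 < q) (t : Fin n → ℝ) (ht0 : ∀ i, 0 ≤ t i)
    (ht : ∑ i, t i < 1) :
    Summable (fun k : Fin n → ℕ =>
      pochhammerR q (∑ i, k i) * ∏ i, t i ^ k i / ((k i).factorial : ℝ)) := by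
  have hT0 : (0:ℝ) ≤ ∑ i, t i := Finset.sum_nonneg (fun i _ => ht0 i)
  have hTabs : |∑ i, t i| < 1 := by rw [abs_of_nonneg hT0]; exact ht
  have hsum : Summable (fun m : ℕ => pochhammerR q m * (∑ i, t i) ^ m / (m.factorial : ℝ)) := by
    simpa using summable_pochhammerR_shift hq hTabs 0
  have hnonneg : ∀ k : Fin n → ℕ,
      0 ≤ pochhammerR q (∑ i, k i) * ∏ i, t i ^ k i / ((k i).factorial : ℝ) := by
    intro k
    apply mul_nonneg (pochhammerR_pos hq _).le
    exact Finset.prod_nonneg (fun i _ => div_nonneg (pow_nonneg (ht0 i) _) (by positivity))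
  apply summable_of_sum_le hnonneg
  intro s
  set M := s.sup (fun k => ∑ i, k i) with hM
  have hsub : s ⊆ (Finset.range (M + 1)).biUnion (fun m => Finset.piAntidiag Finset.univ m) := by
    intro k hk
    rw [Finset.mem_biUnion]
    refine ⟨∑ i, k i, ?_, ?_⟩
    · rw [Finset.mem_range]
      exact Nat.lt_succ_of_le (Finset.le_sup hk)
    · rw [Finset.mem_piAntidiag]
      exact ⟨rfl, fun i _ => Finset.mem_univ i⟩
  calc ∑ k ∈ s, pochhammerR q (∑ i, k i) * ∏ i, t i ^ k i / ((k i).factorial : ℝ)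
      ≤ ∑ k ∈ (Finset.range (M + 1)).biUnion (fun m => Finset.piAntidiag Finset.univ m),
          pochhammerR q (∑ i, k i) * ∏ i, t i ^ k i / ((k i).factorial : ℝ) :=
        Finset.sum_le_sum_of_subset_of_nonneg hsub (fun k _ _ => hnonneg k)
    _ = ∑ m ∈ Finset.range (M + 1), ∑ k ∈ Finset.piAntidiag Finset.univ m,
          pochhammerR q (∑ i, k i) * ∏ i, t i ^ k i / ((k i).factorial : ℝ) := by
        apply Finset.sum_biUnion
        intro m1 h1 m2 h2 hne
        apply Finset.disjoint_left.mpr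
        intro k hk1 hk2
        exact hne ((Finset.mem_piAntidiag.mp hk1).1.symm.trans (Finset.mem_piAntidiag.mp hk2).1)
    _ = ∑ m ∈ Finset.range (M + 1), pochhammerR q m * (∑ i, t i) ^ m / (m.factorial : ℝ) := by
        apply Finset.sum_congr rfl
        intro m _
        rw [mul_div_assoc, ← piAntidiag_prod_sum t m, Finset.mul_sum]
        apply Finset.sum_congr rfl
        intro k hk
        rw [(Finset.mem_piAntidiag.mp hk).1]
    _ ≤ ∑' m : ℕ, pochhammerR q m * (∑ i, t i) ^ m / (m.factorial : ℝ) := by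
        apply Summable.sum_le_tsum _ _ hsum
        intro m _
        have := pochhammerR_pos hq m
        positivity

lemma sum_piAntidiag_eq (a : ℝ) (t : Fin n → ℝ) (m : ℕ) :
    ∑ k ∈ Finset.piAntidiag Finset.univ m,
      pochhammerR a (∑ i, k i) * ∏ i, t i ^ k i / ((k i).factorial : ℝ)
      = pochhammerR a m * ((∑ i, t i) ^ m / (m.factorial : ℝ)) := by
  rw [← piAntidiag_prod_sum t m, Finset.mul_sum]
  exact Finset.sum_congr rfl (fun k hk => by rw [(Finset.mem_piAntidiag.mp hk).1])

lemma summable_lauricella (a : ℝ) (t : Fin n → ℝ) (ht : ∑ i, |t i| < 1) :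
    Summable (fun k : Fin n → ℕ =>
      pochhammerR a (∑ i, k i) * ∏ i, t i ^ k i / ((k i).factorial : ℝ)) := by
  apply Summable.of_norm_bounded
    (g := fun k : Fin n → ℕ =>
      pochhammerR (|a| + 1) (∑ i, k i) * ∏ i, |t i| ^ k i / ((k i).factorial : ℝ))
  · exact summable_lauricella_nonneg (by positivity) _ (fun i => abs_nonneg _) ht
  · intro k
    rw [Real.norm_eq_abs, abs_mul]
    apply mul_le_mul (abs_pochhammerR_le a _) ?_ (abs_nonneg _)
      (pochhammerR_pos (by positivity) _).le
    rw [Finset.abs_prod]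
    apply le_of_eq
    apply Finset.prod_congr rfl
    intro i _
    rw [abs_div, abs_pow, abs_of_pos (show (0:ℝ) < (((k i).factorial : ℕ) : ℝ) by positivity)]

lemma hasSum_lauricella_pt (a : ℝ) (t : Fin n → ℝ) (ht : ∑ i, |t i| < 1) :
    HasSum (fun k : Fin n → ℕ =>
      pochhammerR a (∑ i, k i) * ∏ i, t i ^ k i / ((k i).factorial : ℝ))
      ((1 - ∑ i, t i) ^ (-a)) := by
  set f : (Fin n → ℕ) → ℝ := fun k =>
    pochhammerR a (∑ i, k i) * ∏ i, t i ^ k i / ((k i).factorial : ℝ) with hf_def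
  have hsummable := summable_lauricella a t ht
  have habs : |∑ i, t i| < 1 := lt_of_le_of_lt (Finset.abs_sum_le_sum_abs _ _) ht
  have hbin := hasSum_binomialR a habs
  have hfib := hsummable.hasSum.tsum_fiberwise (fun k => ∑ i, k i)
  have hset : ∀ m : ℕ, (fun k : Fin n → ℕ => ∑ i, k i) ⁻¹' {m}
      = ↑(Finset.piAntidiag (Finset.univ : Finset (Fin n)) m) := by
    intro m
    ext k
    simp [Finset.mem_piAntidiag]
  have hfibval : (fun m : ℕ => ∑' k : (fun k : Fin n → ℕ => ∑ i, k i) ⁻¹' {m}, f k)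
      = fun m : ℕ => pochhammerR a m * ((∑ i, t i) ^ m / (m.factorial : ℝ)) := by
    funext m
    rw [← sum_piAntidiag_eq a t m, hset m]
    exact Finset.tsum_subtype (Finset.piAntidiag (Finset.univ : Finset (Fin n)) m) f
  rw [hfibval] at hfib
  have hbin' : HasSum (fun m : ℕ => pochhammerR a m * ((∑ i, t i) ^ m / (m.factorial : ℝ)))
      ((1 - ∑ i, t i) ^ (-a)) := by
    have : (fun m : ℕ => pochhammerR a m * ((∑ i, t i) ^ m / (m.factorial : ℝ)))
        = fun m : ℕ => pochhammerR a m * (∑ i, t i) ^ m / (m.factorial : ℝ) := by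
      funext m; ring
    rw [this]
    exact hbin
  have hval : (∑' k, f k) = (1 - ∑ i, t i) ^ (-a) := hfib.unique hbin'
  rw [← hval]
  exact hsummable.hasSum

lemma integrableOn_betaR {p q : ℝ} (hp : 0 < p) (hq : 0 < q) :
    IntegrableOn (fun t : ℝ => t ^ (p - 1) * (1 - t) ^ (q - 1)) (Set.Icc 0 1) := by
  have hconv := Complex.betaIntegral_convergent (u := (p:ℂ)) (v := (q:ℂ))
    (by simpa using hp) (by simpa using hq)
  rw [intervalIntegrable_iff_integrableOn_Ioc_of_le zero_le_one] at hconv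
  have hre : IntegrableOn
      (fun x : ℝ => ((x : ℂ) ^ ((p:ℂ) - 1) * (1 - (x:ℂ)) ^ ((q:ℂ) - 1)).re)
      (Set.Ioc 0 1) := hconv.re
  have heq : Set.EqOn (fun x : ℝ => ((x : ℂ) ^ ((p:ℂ) - 1) * (1 - (x:ℂ)) ^ ((q:ℂ) - 1)).re)
      (fun t : ℝ => t ^ (p - 1) * (1 - t) ^ (q - 1)) (Set.Ioc 0 1) := by
    intro x hx
    have hx0 : (0:ℝ) ≤ x := hx.1.le
    have hx1 : (0:ℝ) ≤ 1 - x := by linarith [hx.2]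
    simp only
    rw [show ((p:ℂ) - 1) = ((p - 1 : ℝ) : ℂ) by push_cast; ring,
      show ((q:ℂ) - 1) = ((q - 1 : ℝ) : ℂ) by push_cast; ring,
      show (1 - (x:ℂ)) = ((1 - x : ℝ) : ℂ) by push_cast; ring,
      ← Complex.ofReal_cpow hx0, ← Complex.ofReal_cpow hx1, ← Complex.ofReal_mul]
    rw [Complex.ofReal_re]
  rw [integrableOn_Icc_iff_integrableOn_Ioc]
  exact (hre.congr_fun heq measurableSet_Ioc)

lemma integral_betaR {p q : ℝ} (hp : 0 < p) (hq : 0 < q) :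
    ∫ t in Set.Icc (0:ℝ) 1, t ^ (p - 1) * (1 - t) ^ (q - 1)
      = Real.Gamma p * Real.Gamma q / Real.Gamma (p + q) := by
  have h1 := Complex.Gamma_mul_Gamma_eq_betaIntegral
    (s := (p:ℂ)) (t := (q:ℂ)) (by simpa using hp) (by simpa using hq)
  have h2 : Complex.betaIntegral p q
      = ((∫ t in (0:ℝ)..1, t ^ (p - 1) * (1 - t) ^ (q - 1) : ℝ) : ℂ) := by
    rw [Complex.betaIntegral, ← intervalIntegral.integral_ofReal]
    apply intervalIntegral.integral_congr
    intro x hx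
    rw [Set.uIcc_of_le zero_le_one] at hx
    have hx0 : (0:ℝ) ≤ x := hx.1
    have hx1 : (0:ℝ) ≤ 1 - x := by linarith [hx.2]
    simp only
    rw [show ((p:ℂ) - 1) = ((p - 1 : ℝ) : ℂ) by push_cast; ring,
      show ((q:ℂ) - 1) = ((q - 1 : ℝ) : ℂ) by push_cast; ring,
      show (1 - (x:ℂ)) = ((1 - x : ℝ) : ℂ) by push_cast; ring,
      ← Complex.ofReal_cpow hx0, ← Complex.ofReal_cpow hx1, ← Complex.ofReal_mul]
  rw [h2] at h1
  rw [show ((p:ℂ) + (q:ℂ)) = ((p + q : ℝ) : ℂ) by push_cast; ring] at h1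
  rw [Complex.Gamma_ofReal, Complex.Gamma_ofReal, Complex.Gamma_ofReal] at h1
  rw [← Complex.ofReal_mul, ← Complex.ofReal_mul] at h1
  have h3 : Real.Gamma p * Real.Gamma q
      = Real.Gamma (p + q) * ∫ t in (0:ℝ)..1, t ^ (p - 1) * (1 - t) ^ (q - 1) :=
    Complex.ofReal_injective h1
  have hG : Real.Gamma (p + q) ≠ 0 := (Real.Gamma_pos_of_pos (by positivity)).ne'
  rw [MeasureTheory.integral_Icc_eq_integral_Ioc,
    ← intervalIntegral.integral_of_le zero_le_one]
  field_simp
  linarith [h3]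

lemma Gamma_add_natR {t : ℝ} (ht : 0 < t) (k : ℕ) :
    Real.Gamma (t + k) = Real.Gamma t * pochhammerR t k := by
  induction k with
  | zero => simp [pochhammerR_zero]
  | succ k ih =>
    have h1 : t + ((k : ℝ) + 1) = (t + k) + 1 := by ring
    push_cast
    rw [h1, Real.Gamma_add_one (by positivity), ih, pochhammerR_succ]
    ring

lemma rpow_mul_pow_eq {b : ℝ} (hb : 0 < b) {s : ℝ} (hs : 0 ≤ s) (k : ℕ) :
    s ^ (b - 1) * s ^ k = s ^ (b + k - 1) := by
  rcases eq_or_lt_of_le hs with h0 | h0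
  · rcases Nat.eq_zero_or_pos k with rfl | hk
    · norm_num
    · rw [← h0, zero_pow hk.ne', mul_zero,
        Real.zero_rpow (ne_of_gt (show (0:ℝ) < b + (k:ℝ) - 1 by
          have : (1:ℝ) ≤ (k:ℝ) := by exact_mod_cast hk
          linarith))]
  · rw [← Real.rpow_natCast s k, ← Real.rpow_add h0]
    ring_nf

/-- indicator of a product over the cube equals product of indicators -/
lemma indicator_prod_pi {n : ℕ} (g : Fin n → ℝ → ℝ) (u : Fin n → ℝ) :
    (∏ i, ((Set.Icc (0:ℝ) 1).indicator (g i)) (u i))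
      = (Set.univ.pi fun _ : Fin n => Set.Icc (0:ℝ) 1).indicator
          (fun v => ∏ i, g i (v i)) u := by
  by_cases hu : u ∈ Set.univ.pi fun _ : Fin n => Set.Icc (0:ℝ) 1
  · rw [Set.indicator_of_mem hu]
    apply Finset.prod_congr rfl
    intro i _
    exact Set.indicator_of_mem (hu i (Set.mem_univ i)) _
  · rw [Set.indicator_of_notMem hu]
    rw [Set.mem_pi] at hu
    push_neg at hu
    obtain ⟨j, _, hj⟩ := hu
    apply Finset.prod_eq_zero (Finset.mem_univ j)
    exact Set.indicator_of_notMem hj _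

lemma componentEqOn {bi qi xi : ℝ} (hb : 0 < bi) (k : ℕ) :
    Set.EqOn
      (fun s : ℝ => s ^ (bi - 1) * (1 - s) ^ (qi - 1) * (xi * s) ^ k / (k.factorial : ℝ))
      (fun s : ℝ => xi ^ k / (k.factorial : ℝ) * (s ^ (bi + k - 1) * (1 - s) ^ (qi - 1)))
      (Set.Icc 0 1) := by
  intro s hs
  simp only
  rw [mul_pow, ← rpow_mul_pow_eq hb hs.1 k]
  ring

lemma componentIntegrableOn {bi qi : ℝ} (hb : 0 < bi) (hq : 0 < qi) (xi : ℝ) (k : ℕ) :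
    IntegrableOn (fun s : ℝ => s ^ (bi - 1) * (1 - s) ^ (qi - 1) * (xi * s) ^ k
      / (k.factorial : ℝ)) (Set.Icc 0 1) := by
  have hp : (0:ℝ) < bi + (k:ℝ) := by positivity
  have h1 : IntegrableOn (fun s : ℝ => xi ^ k / (k.factorial : ℝ)
      * (s ^ (bi + (k:ℝ) - 1) * (1 - s) ^ (qi - 1))) (Set.Icc 0 1) :=
    (integrableOn_betaR hp hq).const_mul _
  exact h1.congr_fun (fun s hs => ((componentEqOn hb k) hs).symm) measurableSet_Icc

lemma componentIntegralEq {bi qi : ℝ} (hb : 0 < bi) (hq : 0 < qi) (xi : ℝ) (k : ℕ) :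
    ∫ s in Set.Icc (0:ℝ) 1,
        s ^ (bi - 1) * (1 - s) ^ (qi - 1) * (xi * s) ^ k / (k.factorial : ℝ)
      = xi ^ k / (k.factorial : ℝ)
        * (Real.Gamma (bi + k) * Real.Gamma qi / Real.Gamma (bi + k + qi)) := by
  have hp : (0:ℝ) < bi + (k:ℝ) := by positivity
  rw [setIntegral_congr_fun measurableSet_Icc (componentEqOn hb k),
    MeasureTheory.integral_const_mul, integral_betaR hp hq]

lemma componentAbsBound {bi qi : ℝ} (hb : 0 < bi) (hq : 0 < qi) (xi : ℝ) (k : ℕ) :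
    ∫ s in Set.Icc (0:ℝ) 1,
        |s ^ (bi - 1) * (1 - s) ^ (qi - 1) * (xi * s) ^ k / (k.factorial : ℝ)|
      ≤ |xi| ^ k / (k.factorial : ℝ)
        * ∫ s in Set.Icc (0:ℝ) 1, s ^ (bi - 1) * (1 - s) ^ (qi - 1) := by
  have hp : (0:ℝ) < bi + (k:ℝ) := by positivity
  have habs : Set.EqOn
      (fun s : ℝ => |s ^ (bi - 1) * (1 - s) ^ (qi - 1) * (xi * s) ^ k / (k.factorial : ℝ)|)
      (fun s : ℝ => |xi| ^ k / (k.factorial : ℝ) * (s ^ (bi + k - 1) * (1 - s) ^ (qi - 1)))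
      (Set.Icc 0 1) := by
    intro s hs
    have heq := componentEqOn (qi := qi) (xi := xi) hb k hs
    simp only at heq ⊢
    rw [heq]
    have h1 : (0:ℝ) ≤ s ^ (bi + (k:ℝ) - 1) := Real.rpow_nonneg hs.1 _
    have h2 : (0:ℝ) ≤ (1 - s) ^ (qi - 1) := Real.rpow_nonneg (by linarith [hs.2]) _
    rw [abs_mul, abs_div, abs_pow, abs_of_nonneg (mul_nonneg h1 h2),
      abs_of_pos (show (0:ℝ) < (k.factorial : ℝ) by positivity)]
  rw [setIntegral_congr_fun measurableSet_Icc habs, MeasureTheory.integral_const_mul]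
  apply mul_le_mul_of_nonneg_left ?_ (by positivity)
  apply setIntegral_mono_on
  · exact (integrableOn_betaR hp hq).mono_set (by simp)
  · exact (integrableOn_betaR hb hq).mono_set (by simp)
  · exact measurableSet_Icc
  · intro s hs
    rw [← rpow_mul_pow_eq hb hs.1 k]
    have h2 : (0:ℝ) ≤ (1 - s) ^ (qi - 1) := Real.rpow_nonneg (by linarith [hs.2]) _
    have h3 : (0:ℝ) ≤ s ^ (bi - 1) := Real.rpow_nonneg hs.1 _
    have h4 : s ^ k ≤ 1 := pow_le_one₀ hs.1 hs.2
    nlinarith [mul_nonneg h3 h2, pow_nonneg hs.1 k]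

/-- Euler-type integral representation of the Lauricella function `F_A^{(n)}`:
for `0 < b_i < c_i` and `|x_1| + ⋯ + |x_n| < 1`, the Lauricella series equals
`∏ Γ(c_i)/(Γ(b_i)Γ(c_i−b_i)) ∫_{[0,1]^n} ∏ u_i^{b_i−1}(1−u_i)^{c_i−b_i−1} (1−Σ x_i u_i)^{−a} du`. -/
theorem lauricella_euler_integral (n : ℕ) (hn : 1 ≤ n) (a : ℝ) (b c x : Fin n → ℝ)
    (hbc : ∀ i, 0 < b i ∧ b i < c i) (hx : ∑ i, |x i| < 1) :
    lauricellaSeries n a b c x =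
      (∏ i, Real.Gamma (c i) / (Real.Gamma (b i) * Real.Gamma (c i - b i))) *
        ∫ u in Set.univ.pi (fun _ : Fin n => Set.Icc (0 : ℝ) 1),
          (∏ i, u i ^ (b i - 1) * (1 - u i) ^ (c i - b i - 1)) *
            (1 - ∑ i, x i * u i) ^ (-a) := by
  classical
  have hb : ∀ i, 0 < b i := fun i => (hbc i).1
  have hc : ∀ i, 0 < c i := fun i => lt_trans (hbc i).1 (hbc i).2
  have hqpos : ∀ i, 0 < c i - b i := fun i => sub_pos.mpr (hbc i).2
  set S : Set (Fin n → ℝ) := Set.univ.pi (fun _ : Fin n => Set.Icc (0:ℝ) 1) with hS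
  have hSm : MeasurableSet S := MeasurableSet.univ_pi (fun _ => measurableSet_Icc)
  set inr : Fin n → ℕ → ℝ → ℝ := fun i ki s =>
    s ^ (b i - 1) * (1 - s) ^ (c i - b i - 1) * (x i * s) ^ ki / (ki.factorial : ℝ)
    with hinner
  set f : (Fin n → ℕ) → Fin n → ℝ → ℝ := fun k i =>
    (Set.Icc (0:ℝ) 1).indicator (inr i (k i)) with hf
  set G : (Fin n → ℕ) → (Fin n → ℝ) → ℝ := fun k u =>
    pochhammerR a (∑ i, k i) * ∏ i, f k i (u i) with hG
  set Phi : (Fin n → ℝ) → ℝ := fun v =>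
    (∏ i, v i ^ (b i - 1) * (1 - v i) ^ (c i - b i - 1)) * (1 - ∑ i, x i * v i) ^ (-a)
    with hPhi
  have hIntOn : ∀ (i : Fin n) (ki : ℕ), IntegrableOn (inr i ki) (Set.Icc 0 1) :=
    fun i ki => componentIntegrableOn (hb i) (hqpos i) (x i) ki
  have hfInt : ∀ k i, Integrable (f k i) := fun k i =>
    (integrable_indicator_iff measurableSet_Icc).mpr (hIntOn i (k i))
  have hGInt : ∀ k, Integrable (G k) := fun k =>
    (Integrable.fintype_prod (f := fun i => f k i) (fun i => hfInt k i)).const_mul _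
  -- pointwise expansion
  have hpt : ∀ u : Fin n → ℝ, S.indicator Phi u = ∑' k, G k u := by
    intro u
    by_cases hu : u ∈ S
    · rw [Set.indicator_of_mem hu]
      have hui : ∀ i, u i ∈ Set.Icc (0:ℝ) 1 := fun i => hu i (Set.mem_univ i)
      have htx : ∑ i, |x i * u i| < 1 := by
        refine lt_of_le_of_lt (Finset.sum_le_sum (fun i _ => ?_)) hx
        rw [abs_mul]
        calc |x i| * |u i| ≤ |x i| * 1 :=
              mul_le_mul_of_nonneg_left
                (abs_le.mpr ⟨by linarith [(hui i).1], (hui i).2⟩) (abs_nonneg _)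
          _ = |x i| := mul_one _
      have hHS := (hasSum_lauricella_pt a (fun i => x i * u i) htx).mul_left
        (∏ i, u i ^ (b i - 1) * (1 - u i) ^ (c i - b i - 1))
      have hfun : (fun k : Fin n → ℕ =>
          (∏ i, u i ^ (b i - 1) * (1 - u i) ^ (c i - b i - 1)) *
            (pochhammerR a (∑ i, k i) * ∏ i, (x i * u i) ^ k i / ((k i).factorial : ℝ)))
          = fun k => G k u := by
        funext k
        rw [hG]
        simp only
        have hprod : ∏ i, f k i (u i)
            = (∏ i, u i ^ (b i - 1) * (1 - u i) ^ (c i - b i - 1)) *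
                ∏ i, (x i * u i) ^ k i / ((k i).factorial : ℝ) := by
          rw [← Finset.prod_mul_distrib]
          apply Finset.prod_congr rfl
          intro i _
          rw [hf]
          simp only
          rw [Set.indicator_of_mem (hui i), hinner]
          simp only
          ring
        rw [hprod]
        ring
      rw [hfun] at hHS
      rw [hPhi]
      exact hHS.tsum_eq.symm
    · rw [Set.indicator_of_notMem hu]
      have hz : ∀ k, G k u = 0 := by
        intro k
        rw [hS, Set.mem_pi] at hu
        push_neg at hu
        obtain ⟨j, _, hj⟩ := hu
        rw [hG]
        simp only
        rw [Finset.prod_eq_zero (Finset.mem_univ j)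
          (by rw [hf]; simp only; exact Set.indicator_of_notMem hj _), mul_zero]
      rw [tsum_congr hz, tsum_zero]
  -- norm integral bound
  have habs_f : ∀ k (i : Fin n), (∫ s, |f k i s|) = ∫ s in Set.Icc (0:ℝ) 1, |inr i (k i) s| := by
    intro k i
    rw [← MeasureTheory.integral_indicator measurableSet_Icc]
    congr 1
    funext s
    by_cases hs : s ∈ Set.Icc (0:ℝ) 1
    · rw [hf]; simp only
      rw [Set.indicator_of_mem hs, Set.indicator_of_mem hs]
    · rw [hf]; simp only
      rw [Set.indicator_of_notMem hs, Set.indicator_of_notMem hs, abs_zero]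
  have hGnorm : ∀ k, (∫ u, ‖G k u‖) =
      |pochhammerR a (∑ i, k i)| * ∏ i, ∫ s, |f k i s| := by
    intro k
    have h1 : (fun u : Fin n → ℝ => ‖G k u‖)
        = fun u => |pochhammerR a (∑ i, k i)| * ∏ i, |f k i (u i)| := by
      funext u
      rw [hG]
      simp only [Real.norm_eq_abs, abs_mul, Finset.abs_prod]
    rw [h1, MeasureTheory.integral_const_mul]
    congr 1
    exact MeasureTheory.integral_fintype_prod_eq_prod (fun i s => |f k i s|)
  set B : Fin n → ℝ := fun i =>
    ∫ s in Set.Icc (0:ℝ) 1, s ^ (b i - 1) * (1 - s) ^ (c i - b i - 1) with hB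
  have hGnorm_le : ∀ k, (∫ u, ‖G k u‖) ≤
      (pochhammerR (|a| + 1) (∑ i, k i) * ∏ i, |x i| ^ k i / ((k i).factorial : ℝ))
        * ∏ i, B i := by
    intro k
    rw [hGnorm k]
    have h2 : ∀ i : Fin n, (∫ s, |f k i s|) ≤ |x i| ^ k i / ((k i).factorial : ℝ) * B i := by
      intro i
      rw [habs_f k i, hB]
      exact componentAbsBound (hb i) (hqpos i) (x i) (k i)
    have h3 : (∏ i, ∫ s, |f k i s|) ≤ ∏ i, (|x i| ^ k i / ((k i).factorial : ℝ) * B i) :=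
      Finset.prod_le_prod (fun i _ => integral_nonneg (fun s => abs_nonneg _))
        (fun i _ => h2 i)
    calc |pochhammerR a (∑ i, k i)| * ∏ i, ∫ s, |f k i s|
        ≤ pochhammerR (|a| + 1) (∑ i, k i) *
            ∏ i, (|x i| ^ k i / ((k i).factorial : ℝ) * B i) := by
          apply mul_le_mul (abs_pochhammerR_le a _) h3
            (Finset.prod_nonneg (fun i _ => integral_nonneg (fun s => abs_nonneg _)))
            (pochhammerR_pos (by positivity) _).le
      _ = (pochhammerR (|a| + 1) (∑ i, k i) * ∏ i, |x i| ^ k i / ((k i).factorial : ℝ))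
            * ∏ i, B i := by
          rw [Finset.prod_mul_distrib]
          ring
  have hsum_norm : Summable (fun k : Fin n → ℕ => ∫ u, ‖G k u‖) := by
    apply Summable.of_nonneg_of_le
      (fun k => integral_nonneg (fun u => norm_nonneg _)) hGnorm_le
    exact (summable_lauricella_nonneg (by positivity) (fun i => |x i|)
      (fun i => abs_nonneg _) hx).mul_right _
  have hswap := MeasureTheory.integral_tsum_of_summable_integral_norm hGInt hsum_norm
  -- integral values
  have hGval : ∀ k, (∫ u, G k u) = pochhammerR a (∑ i, k i) *
      ∏ i, (x i ^ k i / ((k i).factorial : ℝ)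
        * (Real.Gamma (b i + k i) * Real.Gamma (c i - b i)
            / Real.Gamma (b i + k i + (c i - b i)))) := by
    intro k
    rw [hG]
    simp only
    rw [MeasureTheory.integral_const_mul]
    congr 1
    rw [MeasureTheory.integral_fintype_prod_volume_eq_prod (fun i => f k i)]
    apply Finset.prod_congr rfl
    intro i _
    rw [hf]
    simp only
    rw [MeasureTheory.integral_indicator measurableSet_Icc]
    exact componentIntegralEq (hb i) (hqpos i) (x i) (k i)
  -- assemble
  have hI : (∫ u in S, Phi u) = ∑' k, ∫ u, G k u := by
    rw [← MeasureTheory.integral_indicator hSm]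
    rw [show (fun u => S.indicator Phi u) = fun u => ∑' k, G k u from funext hpt]
    exact hswap.symm
  rw [show (∫ u in Set.univ.pi (fun _ : Fin n => Set.Icc (0 : ℝ) 1),
        (∏ i, u i ^ (b i - 1) * (1 - u i) ^ (c i - b i - 1)) *
          (1 - ∑ i, x i * u i) ^ (-a)) = ∫ u in S, Phi u from rfl]
  rw [hI, ← tsum_mul_left]
  rw [lauricellaSeries]
  apply tsum_congr
  intro k
  rw [hGval k]
  symm
  have hper : ∀ i : Fin n,
      Real.Gamma (c i) / (Real.Gamma (b i) * Real.Gamma (c i - b i)) *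
        (x i ^ k i / ((k i).factorial : ℝ)
          * (Real.Gamma (b i + k i) * Real.Gamma (c i - b i)
              / Real.Gamma (b i + k i + (c i - b i))))
      = pochhammerR (b i) (k i) / (pochhammerR (c i) (k i) * ((k i).factorial : ℝ))
          * x i ^ k i := by
    intro i
    have h1 : b i + (k i : ℝ) + (c i - b i) = c i + k i := by ring
    rw [h1, Gamma_add_natR (hb i), Gamma_add_natR (hc i)]
    have hGb := Real.Gamma_pos_of_pos (hb i)
    have hGc := Real.Gamma_pos_of_pos (hc i)
    have hGq := Real.Gamma_pos_of_pos (hqpos i)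
    have hpc := pochhammerR_pos (hc i) (k i)
    have hfk : (0:ℝ) < ((k i).factorial : ℝ) := by positivity
    field_simp
  calc (∏ i, Real.Gamma (c i) / (Real.Gamma (b i) * Real.Gamma (c i - b i))) *
        (pochhammerR a (∑ i, k i) *
          ∏ i, (x i ^ k i / ((k i).factorial : ℝ)
            * (Real.Gamma (b i + k i) * Real.Gamma (c i - b i)
                / Real.Gamma (b i + k i + (c i - b i)))))
      = pochhammerR a (∑ i, k i) *
          ∏ i, (Real.Gamma (c i) / (Real.Gamma (b i) * Real.Gamma (c i - b i)) *
            (x i ^ k i / ((k i).factorial : ℝ)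
              * (Real.Gamma (b i + k i) * Real.Gamma (c i - b i)
                  / Real.Gamma (b i + k i + (c i - b i))))) := by
        conv_rhs => rw [Finset.prod_mul_distrib]
        ring
    _ = pochhammerR a (∑ i, k i) *
          ∏ i, (pochhammerR (b i) (k i)
              / (pochhammerR (c i) (k i) * ((k i).factorial : ℝ)) * x i ^ k i) := by
        rw [Finset.prod_congr rfl (fun i _ => hper i)]
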